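/- Let X and Y be compact Hausdorff spaces, f : X → Y a continuous quasi-open map, and U ⊆ Y a regular open set (i.e. interior (closure U) = U). Then interior (closure (f⁻¹ (interior (Uᶜ)))) = interior ((interior (closure (f⁻¹ U)))ᶜ), where complements are taken in Y and X respectively. -/

import Mathlib

/-!
With `A = f⁻¹ U` and `B = f⁻¹ (interior Uᶜ)`, the set `B` is open, disjoint from `A`, and
`A ∪ B` is dense, because `U ∪ interior Uᶜ` is dense and quasi-open maps pull back dense sets
to dense sets. For any such pair, `closure B` misses `interior (closure A)` because `B` is
open, while density of `A ∪ B` puts `(closure A)ᶜ`, hence `(interior (closure A))ᶜ`, inside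
`closure B`.
-/

open Set

def IsQuasiOpenMap {X Y : Type*} [TopologicalSpace X] [TopologicalSpace Y] (f : X → Y) : Prop :=
  ∀ U : Set X, IsOpen U → U.Nonempty → (interior (f '' U)).Nonempty

section

variable {X Y : Type*} [TopologicalSpace X] [TopologicalSpace Y]

theorem Dense.preimage_of_isQuasiOpenMap {f : X → Y} (hf : IsQuasiOpenMap f) {D : Set Y}
    (hD : Dense D) : Dense (f ⁻¹' D) := by
  refine dense_iff_inter_open.2 fun O hO hne ↦ ?_
  obtain ⟨y, hyO, hyD⟩ := hD.inter_open_nonempty _ isOpen_interior (hf O hO hne)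
  obtain ⟨x, hx, rfl⟩ := interior_subset hyO
  exact ⟨x, hx, hyD⟩

theorem dense_union_interior_compl (s : Set X) : Dense (s ∪ interior sᶜ) := by
  refine dense_iff_closure_eq.2 (eq_univ_of_univ_subset fun x _ ↦ ?_)
  rw [closure_union, interior_compl]
  by_cases hx : x ∈ closure s
  · exact Or.inl hx
  · exact Or.inr (subset_closure hx)

theorem compl_closure_subset_closure_of_dense_union {s t : Set X} (h : Dense (s ∪ t)) :
    (closure s)ᶜ ⊆ closure t := by
  refine (h.open_subset_closure_inter isClosed_closure.isOpen_compl).trans (closure_mono ?_)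
  rintro x ⟨hxs, hx | hx⟩
  · exact absurd (subset_closure hx) hxs
  · exact hx

theorem interior_closure_eq_interior_compl_interior_closure {s t : Set X} (ht : IsOpen t)
    (hst : Disjoint s t) (hdense : Dense (s ∪ t)) :
    interior (closure t) = interior (interior (closure s))ᶜ := by
  apply subset_antisymm
  · have hts : Disjoint t (closure s) := hst.symm.closure_right ht
    refine interior_mono (disjoint_left.1 ?_)
    exact (hts.mono_right interior_subset).closure_left isOpen_interior
  · refine interior_mono ?_
    calc (interior (closure s))ᶜ = closure (closure s)ᶜ := closure_compl.symm
      _ ⊆ closure t := closure_minimal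
          (compl_closure_subset_closure_of_dense_union hdense) isClosed_closure

end

theorem quasiOpen_preimage_regularOpen_neg_general
    {X Y : Type*} [TopologicalSpace X]
    [TopologicalSpace Y]
    (f : X → Y) (hf : Continuous f)
    (hqo : ∀ U : Set X, IsOpen U → U.Nonempty → (interior (f '' U)).Nonempty)
    (U : Set Y) :
    interior (closure (f ⁻¹' (interior (Uᶜ)))) =
      interior ((interior (closure (f ⁻¹' U)))ᶜ) := by
  refine interior_closure_eq_interior_compl_interior_closure
    (isOpen_interior.preimage hf) ?_ ?_
  · exact (disjoint_compl_right.mono_right interior_subset).preimage f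
  · exact (dense_union_interior_compl U).preimage_of_isQuasiOpenMap hqo

/-- For a continuous quasi-open map between compact Hausdorff spaces and a
regular open set `U ⊆ Y`, the regular-open preimage operation preserves negation. -/
theorem quasiOpen_preimage_regularOpen_neg
    {X Y : Type*} [TopologicalSpace X] [CompactSpace X] [T2Space X]
    [TopologicalSpace Y] [CompactSpace Y] [T2Space Y]
    (f : X → Y) (hf : Continuous f)
    (hqo : ∀ U : Set X, IsOpen U → U.Nonempty → (interior (f '' U)).Nonempty)
    (U : Set Y) (hU : interior (closure U) = U) :
    interior (closure (f ⁻¹' (interior (Uᶜ)))) =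
      interior ((interior (closure (f ⁻¹' U)))ᶜ) :=
  quasiOpen_preimage_regularOpen_neg_general f hf hqo U
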